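/- Pure-reward risk-dominance threshold: assume T > R > P > S, ε ≥ 0, α = 0, and u > (T + P − R − S)/2. Then, under the reward payoff matrix Π_R, the strategy ACD is risk-dominant against every one of the six strategies ADC, ADD, NCC, NCD, NDC, NDD if and only if ε < 2(u + min{T − S, R − P}). -/

import Mathlib

/-!
Each risk-dominance condition of ACD is linear in the parameters. Against ADC and ADD the
commitment is formed and the opponent defects in it, so the participation costs cancel and the
condition is `T + P - R - S < 2u`. Against a non-committer there is
no commitment, ACD defects, and the condition reads `ε < 2(u + T - S)` or `ε < 2(u + R - P)`
according to whether the opponent cooperates or defects.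
-/

/-- A strategy in the commitment game: whether to accept a prior commitment
(`commit = true` means "A"), the action if a commitment is formed
(`inAct = true` means "C"), and the action if no commitment is formed
(`outAct = true` means "C"). -/
structure Strat where
  commit : Bool
  inAct : Bool
  outAct : Bool
deriving DecidableEq

def ACC : Strat := ⟨true, true, true⟩
def ACD : Strat := ⟨true, true, false⟩
def ADC : Strat := ⟨true, false, true⟩
def ADD : Strat := ⟨true, false, false⟩
def NCC : Strat := ⟨false, true, true⟩
def NCD : Strat := ⟨false, true, false⟩
def NDC : Strat := ⟨false, false, true⟩
def NDD : Strat := ⟨false, false, false⟩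

/-- Row player's payoff in the one-shot Prisoner's Dilemma with payoffs
`T, R, P, S`; `true` codes cooperation. -/
def pd (T R P S : ℝ) (myC otherC : Bool) : ℝ :=
  if myC then (if otherC then R else S) else (if otherC then T else P)

/-- The reward payoff matrix `Π_R`: the row player receives its PD payoff
(commitment formed iff both commit; then each pays `ε/2` and plays its
in-commitment action, otherwise both play their no-commitment actions),
plus `α·u` if it accepted the commitment, plus an additional `(1−α)·u`
if a commitment is formed and it cooperates in it. -/
noncomputable def payR (T R P S ε u α : ℝ) (s t : Strat) : ℝ :=
  (if s.commit ∧ t.commit then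
      pd T R P S s.inAct t.inAct - ε / 2 + (if s.inAct then (1 - α) * u else 0)
   else pd T R P S s.outAct t.outAct)
  + (if s.commit then α * u else 0)

/-- The punishment payoff matrix `Π_P`: as `Π_R` except that instead of the
reward `(1−α)·u` for compliance, the amount `(1−α)·u` is subtracted when a
commitment is formed and the row player defects in it. -/
noncomputable def payP (T R P S ε u α : ℝ) (s t : Strat) : ℝ :=
  (if s.commit ∧ t.commit then
      pd T R P S s.inAct t.inAct - ε / 2 - (if s.inAct then 0 else (1 - α) * u)
   else pd T R P S s.outAct t.outAct)
  + (if s.commit then α * u else 0)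

/-- Flip the participation decision of a strategy (A ↔ N). -/
def flipPart (s : Strat) : Strat := ⟨!s.commit, s.inAct, s.outAct⟩

/-- The noisy payoff matrix `Π̃`: with probability `χ` each player independently
errs in its decision whether to join the commitment. -/
noncomputable def noisy (χ : ℝ) (M : Strat → Strat → ℝ) (s t : Strat) : ℝ :=
  (1 - χ) ^ 2 * M s t + χ * (1 - χ) * (M (flipPart s) t + M s (flipPart t))
    + χ ^ 2 * M (flipPart s) (flipPart t)

/-- Strategy `a` is risk-dominant against strategy `b` under payoff matrix `Π`. -/
def RiskDom (M : Strat → Strat → ℝ) (a b : Strat) : Prop :=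
  M a a + M a b > M b a + M b b

/-- `x` is an evolutionarily stable strategy (ESS) of the payoff matrix `Π`. -/
def IsESS (M : Strat → Strat → ℝ) (x : Strat) : Prop :=
  ∀ y : Strat, y ≠ x → M x x > M y x ∨ (M x x = M y x ∧ M x y > M y y)

section RiskDomACD

variable {T R P S ε u α : ℝ} {B : Strat}

theorem riskDom_ACD_iff_of_commit_of_inAct_eq_false (hc : B.commit = true)
    (hd : B.inAct = false) :
    RiskDom (payR T R P S ε u α) ACD B ↔ T + P - R - S < 2 * ((1 - α) * u) := by
  obtain ⟨c, i, o⟩ := B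
  subst hc hd
  simp only [RiskDom, payR, ACD, pd, and_self, if_true, if_false, Bool.false_eq_true]
  constructor <;> intro h <;> linarith

theorem riskDom_ACD_iff_of_not_commit_of_outAct_eq_true (hc : B.commit = false)
    (ho : B.outAct = true) :
    RiskDom (payR T R P S ε u α) ACD B ↔ ε < 2 * ((1 + α) * u + (T - S)) := by
  obtain ⟨c, i, o⟩ := B
  subst hc ho
  simp only [RiskDom, payR, ACD, pd, and_self, and_false, false_and, if_true, if_false,
    Bool.false_eq_true]
  constructor <;> intro h <;> linarith

theorem riskDom_ACD_iff_of_not_commit_of_outAct_eq_false (hc : B.commit = false)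
    (ho : B.outAct = false) :
    RiskDom (payR T R P S ε u α) ACD B ↔ ε < 2 * ((1 + α) * u + (R - P)) := by
  obtain ⟨c, i, o⟩ := B
  subst hc ho
  simp only [RiskDom, payR, ACD, pd, and_self, and_false, false_and, if_true, if_false,
    Bool.false_eq_true]
  constructor <;> intro h <;> linarith

end RiskDomACD

theorem pure_reward_threshold_general (T R P S ε u : ℝ)
    (hu : u > (T + P - R - S) / 2) :
    (∀ B ∈ ({ADC, ADD, NCC, NCD, NDC, NDD} : Set Strat),
        RiskDom (payR T R P S ε u 0) ACD B)
      ↔ ε < 2 * (u + min (T - S) (R - P)) := by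
  simp only [Set.mem_insert_iff, Set.mem_singleton_iff, forall_eq_or_imp, forall_eq]
  rw [riskDom_ACD_iff_of_commit_of_inAct_eq_false rfl rfl,
    riskDom_ACD_iff_of_commit_of_inAct_eq_false rfl rfl,
    riskDom_ACD_iff_of_not_commit_of_outAct_eq_true rfl rfl,
    riskDom_ACD_iff_of_not_commit_of_outAct_eq_false rfl rfl,
    riskDom_ACD_iff_of_not_commit_of_outAct_eq_true rfl rfl,
    riskDom_ACD_iff_of_not_commit_of_outAct_eq_false rfl rfl]
  simp only [sub_zero, add_zero, one_mul]
  have hreward : T + P - R - S < 2 * u := by linarith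
  have hmin :
      2 * (u + min (T - S) (R - P)) = min (2 * (u + (T - S))) (2 * (u + (R - P))) := by
    rw [← min_add_add_left, mul_min_of_nonneg _ _ zero_le_two]
  rw [hmin, lt_min_iff]
  exact ⟨fun ⟨_, _, hTS, hRP, _⟩ => ⟨hTS, hRP⟩,
    fun ⟨hTS, hRP⟩ => ⟨hreward, hreward, hTS, hRP, hTS, hRP⟩⟩

/-- **Pure-reward risk-dominance threshold.**
Assume `T > R > P > S`, `ε ≥ 0`, `α = 0`, and `u > (T + P − R − S)/2`. Under the
reward matrix `Π_R`, ACD is risk-dominant against each of ADC, ADD, NCC, NCD, NDC,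
NDD iff `ε < 2(u + min{T − S, R − P})`. -/
theorem pure_reward_threshold (T R P S ε u : ℝ)
    (hTR : T > R) (hRP : R > P) (hPS : P > S) (hε : 0 ≤ ε)
    (hu : u > (T + P - R - S) / 2) :
    (∀ B ∈ ({ADC, ADD, NCC, NCD, NDC, NDD} : Set Strat),
        RiskDom (payR T R P S ε u 0) ACD B)
      ↔ ε < 2 * (u + min (T - S) (R - P)) :=
  pure_reward_threshold_general T R P S ε u hu
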